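/- Let $n, k$ be positive integers with $k \ge 2$, let $\{X_{ij} : 1 \le i \le j \le nk\}$ be i.i.d. standard normal random variables extended symmetrically, and let $V_1, \dots, V_n$ be any partition of $\{1, \dots, nk\}$ into $n$ disjoint sets of size $k$, with group averages $S_t = \binom{k}{2}^{-1} \sum_{\{i,j\} \subseteq V_t,\ i<j} X_{ij}$. Then for every $\epsilon > 0$, $P\bigl(\exists\, t \neq l \text{ such that } |S_t - S_l| > \epsilon\bigr) \le 4\, e^{2k(1 + \ln n)}\, e^{-\epsilon^2 k(k-1)/32}.$ -/

import Mathlib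

/-!
The sum defining `S_t` runs over `k.choose 2` independent standard Gaussians, so `S_t` is
sub-Gaussian with variance proxy `1 / k.choose 2`, and the Chernoff bound gives
`P(|S_t| ≥ ε/2) ≤ 2 exp(-ε² k(k-1)/16)`. If `|S_t - S_l| > ε` then `|S_t| ≥ ε/2` or
`|S_l| ≥ ε/2`, so a union bound over the `n` groups bounds the probability by
`2n exp(-ε² k(k-1)/16)`, which is smaller than the stated bound.
-/

open MeasureTheory ProbabilityTheory
open scoped ENNReal

/-- The group average `S_t`: the average of the edge weights `X i j` (for `i < j`, both in `V`),
normalised by `k.choose 2 = k(k-1)/2`. -/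
noncomputable def groupAvg {N : ℕ} {Ω : Type*} (k : ℕ)
    (X : Fin N → Fin N → Ω → ℝ) (V : Finset (Fin N)) (ω : Ω) : ℝ :=
  ((k.choose 2 : ℝ))⁻¹ * ∑ p ∈ V ×ˢ V, if p.1 < p.2 then X p.1 p.2 ω else 0

open Real Finset
open scoped NNReal

namespace ProbabilityTheory

section Subgaussian

variable {Ω : Type*} {mΩ : MeasurableSpace Ω} {μ : Measure Ω} {X : Ω → ℝ} {c : ℝ≥0}

lemma HasSubgaussianMGF.of_map_eq_gaussianReal (h : μ.map X = gaussianReal 0 c) :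
    HasSubgaussianMGF X c μ := by
  have hX : AEMeasurable X μ := .of_map_ne_zero (h ▸ IsProbabilityMeasure.ne_zero _)
  rw [← HasSubgaussianMGF.id_map_iff hX, h]
  exact ⟨integrable_exp_mul_gaussianReal, fun t => by simp [mgf_id_gaussianReal]⟩

lemma HasSubgaussianMGF.measureReal_abs_ge_le (h : HasSubgaussianMGF X c μ) {ε : ℝ}
    (hε : 0 ≤ ε) : μ.real {ω | ε ≤ |X ω|} ≤ 2 * exp (-ε ^ 2 / (2 * c)) := by
  have hsplit : {ω | ε ≤ |X ω|} = {ω | ε ≤ X ω} ∪ {ω | ε ≤ (-X) ω} := by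
    ext; simp [le_abs]
  calc μ.real {ω | ε ≤ |X ω|} ≤ μ.real {ω | ε ≤ X ω} + μ.real {ω | ε ≤ (-X) ω} :=
        hsplit ▸ measureReal_union_le _ _
    _ ≤ 2 * exp (-ε ^ 2 / (2 * c)) := by
        linarith [h.measure_ge_le hε, h.neg.measure_ge_le hε]

lemma measureReal_exists_abs_sub_gt_le [IsFiniteMeasure μ] {ι : Type*} [Fintype ι]
    {S : ι → Ω → ℝ} (hS : ∀ i, HasSubgaussianMGF (S i) c μ) {ε : ℝ} (hε : 0 ≤ ε) :
    μ.real {ω | ∃ i j, i ≠ j ∧ ε < |S i ω - S j ω|}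
      ≤ 2 * Fintype.card ι * exp (-ε ^ 2 / (8 * c)) := by
  have hsub : {ω | ∃ i j, i ≠ j ∧ ε < |S i ω - S j ω|} ⊆ ⋃ i, {ω | ε / 2 ≤ |S i ω|} := by
    rintro ω ⟨i, j, -, hij⟩
    have htri := abs_sub (S i ω) (S j ω)
    by_cases hi : ε / 2 ≤ |S i ω|
    · exact Set.mem_iUnion.2 ⟨i, hi⟩
    · exact Set.mem_iUnion.2 ⟨j, by simp only [Set.mem_ofPred_eq]; linarith⟩
  calc μ.real {ω | ∃ i j, i ≠ j ∧ ε < |S i ω - S j ω|}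
      ≤ ∑ i, μ.real {ω | ε / 2 ≤ |S i ω|} :=
        (measureReal_mono hsub).trans (measureReal_iUnion_fintype_le _)
    _ ≤ ∑ _i : ι, 2 * exp (-ε ^ 2 / (8 * c)) := sum_le_sum fun i _ =>
        ((hS i).measureReal_abs_ge_le (ε := ε / 2) (by positivity)).trans_eq (by ring_nf)
    _ = 2 * Fintype.card ι * exp (-ε ^ 2 / (8 * c)) := by
        rw [sum_const, card_univ, nsmul_eq_mul]; ring

end Subgaussian

end ProbabilityTheory

section GroupAverage

variable {N : ℕ}

def strictUpperPairs (V : Finset (Fin N)) : Finset {p : Fin N × Fin N // p.1 ≤ p.2} :=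
  {p ∈ V ×ˢ V | p.1 < p.2}.subtype fun p => p.1 ≤ p.2

lemma filter_le_filter_product_lt (V : Finset (Fin N)) :
    {p ∈ {p ∈ V ×ˢ V | p.1 < p.2} | p.1 ≤ p.2} = {p ∈ V ×ˢ V | p.1 < p.2} :=
  filter_true_of_mem fun _ hp => (mem_filter.1 hp).2.le

lemma card_strictUpperPairs (V : Finset (Fin N)) : #(strictUpperPairs V) = (#V).choose 2 := by
  rw [strictUpperPairs, card_subtype, filter_le_filter_product_lt, card_product_filter_lt]

lemma groupAvg_eq_inv_mul_sum {Ω : Type*} (k : ℕ) (X : Fin N → Fin N → Ω → ℝ)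
    (V : Finset (Fin N)) :
    groupAvg k X V = fun ω => (k.choose 2 : ℝ)⁻¹ * ∑ q ∈ strictUpperPairs V, X q.1.1 q.1.2 ω := by
  ext ω
  rw [groupAvg, strictUpperPairs,
    sum_subtype_eq_sum_filter (fun p : Fin N × Fin N => X p.1 p.2 ω),
    filter_le_filter_product_lt, sum_filter]

lemma hasSubgaussianMGF_groupAvg {Ω : Type*} [MeasurableSpace Ω] {μ : Measure Ω}
    {k : ℕ} (hk : 2 ≤ k) {X : Fin N → Fin N → Ω → ℝ}
    (hindep : iIndepFun (fun p : {p : Fin N × Fin N // p.1 ≤ p.2} => X p.1.1 p.1.2) μ)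
    (hgauss : ∀ i j, i ≤ j → μ.map (X i j) = gaussianReal 0 1)
    {V : Finset (Fin N)} (hV : #V = k) :
    HasSubgaussianMGF (groupAvg k X V) (k.choose 2 : ℝ≥0)⁻¹ μ := by
  have hsum := HasSubgaussianMGF.sum_of_iIndepFun hindep (c := fun _ => 1)
    (s := strictUpperPairs V) fun q _ => .of_map_eq_gaussianReal (hgauss _ _ q.2)
  rw [groupAvg_eq_inv_mul_sum]
  convert hsum.const_mul (k.choose 2 : ℝ)⁻¹ using 1
  rw [sum_const, card_strictUpperPairs, hV, nsmul_one]
  refine NNReal.eq ?_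
  change ((k.choose 2 : ℝ≥0) : ℝ)⁻¹ = (k.choose 2 : ℝ)⁻¹ ^ 2 * ((k.choose 2 : ℝ≥0) : ℝ)
  have hm : (k.choose 2 : ℝ) ≠ 0 := by exact_mod_cast (Nat.choose_pos hk).ne'
  rw [NNReal.coe_natCast]
  field_simp

end GroupAverage

lemma natCast_le_exp_mul_one_add_log (n : ℕ) {c : ℝ} (hc : 1 ≤ c) :
    (n : ℝ) ≤ exp (c * (1 + log n)) := by
  rcases n.eq_zero_or_pos with rfl | hn
  · simpa using (exp_pos _).le
  calc (n : ℝ) = exp (log n) := (exp_log (by exact_mod_cast hn)).symm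
    _ ≤ exp (c * (1 + log n)) := by
      have := log_natCast_nonneg n
      gcongr
      nlinarith

theorem union_bound_partition_general {Ω : Type*} [MeasureSpace Ω]
    [IsProbabilityMeasure (ℙ : Measure Ω)]
    (n k : ℕ) (hk : 2 ≤ k)
    (X : Fin (n * k) → Fin (n * k) → Ω → ℝ)
    (hindep : iIndepFun
      (fun p : {p : Fin (n * k) × Fin (n * k) // p.1 ≤ p.2} => X p.1.1 p.1.2) ℙ)
    (hgauss : ∀ i j : Fin (n * k), i ≤ j → Measure.map (X i j) ℙ = gaussianReal 0 1)
    (V : Fin n → Finset (Fin (n * k)))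
    (hcard : ∀ t, (V t).card = k)
    (ε : ℝ) (hε : 0 < ε) :
    ℙ {ω | ∃ t l : Fin n, t ≠ l ∧ ε < |groupAvg k X (V t) ω - groupAvg k X (V l) ω|}
      ≤ ENNReal.ofReal (4 * Real.exp (2 * (k : ℝ) * (1 + Real.log (n : ℝ))) *
          Real.exp (-(ε ^ 2 * (k : ℝ) * ((k : ℝ) - 1)) / 32)) := by
  have hS t := hasSubgaussianMGF_groupAvg hk hindep hgauss (hcard t)
  have hk1 : (1 : ℝ) ≤ k := by exact_mod_cast (by omega : 1 ≤ k)
  rw [ENNReal.le_ofReal_iff_toReal_le (measure_ne_top _ _) (by positivity)]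
  calc _ ≤ 2 * Fintype.card (Fin n) * exp (-ε ^ 2 / (8 * (k.choose 2 : ℝ≥0)⁻¹)) :=
        measureReal_exists_abs_sub_gt_le hS hε.le
    _ = 2 * n * exp (-(ε ^ 2 * k * (k - 1)) / 16) := by
        rw [Fintype.card_fin, NNReal.coe_inv, NNReal.coe_natCast, Nat.cast_choose_two]
        congr 2
        field_simp
        ring
    _ ≤ 4 * exp (2 * k * (1 + log n)) * exp (-(ε ^ 2 * k * (k - 1)) / 32) := by
        have : 0 ≤ ε ^ 2 * k * (k - 1) := by positivity
        gcongr ?_ * ?_ * ?_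
        · norm_num
        · exact natCast_le_exp_mul_one_add_log n (by linarith)
        · exact exp_le_exp.2 (by linarith)

/-- **Union bound over a partition.**  Let `n, k` be positive integers with `k ≥ 2`, let
`X i j` (`1 ≤ i ≤ j ≤ nk`) be i.i.d. standard normal random variables extended symmetrically,
and let `V₁, …, Vₙ` be any partition of `{1, …, nk}` into `n` disjoint sets of size `k`, with
group averages `S_t`.  Then for every `ε > 0`,
`P(∃ t ≠ l, |S_t - S_l| > ε) ≤ 4·e^{2k(1 + ln n)}·e^{-ε²k(k-1)/32}`. -/
theorem union_bound_partition {Ω : Type*} [MeasureSpace Ω]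
    [IsProbabilityMeasure (ℙ : Measure Ω)]
    (n k : ℕ) (hn : 0 < n) (hk : 2 ≤ k)
    (X : Fin (n * k) → Fin (n * k) → Ω → ℝ)
    (hsym : ∀ i j, X j i = X i j)
    (hmeas : ∀ i j, Measurable (X i j))
    (hindep : iIndepFun
      (fun p : {p : Fin (n * k) × Fin (n * k) // p.1 ≤ p.2} => X p.1.1 p.1.2) ℙ)
    (hgauss : ∀ i j : Fin (n * k), i ≤ j → Measure.map (X i j) ℙ = gaussianReal 0 1)
    (V : Fin n → Finset (Fin (n * k)))
    (hcard : ∀ t, (V t).card = k)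
    (hdisj : ∀ t l, t ≠ l → Disjoint (V t) (V l))
    (hcover : Finset.univ.biUnion V = (Finset.univ : Finset (Fin (n * k))))
    (ε : ℝ) (hε : 0 < ε) :
    ℙ {ω | ∃ t l : Fin n, t ≠ l ∧ ε < |groupAvg k X (V t) ω - groupAvg k X (V l) ω|}
      ≤ ENNReal.ofReal (4 * Real.exp (2 * (k : ℝ) * (1 + Real.log (n : ℝ))) *
          Real.exp (-(ε ^ 2 * (k : ℝ) * ((k : ℝ) - 1)) / 32)) :=
  union_bound_partition_general n k hk X hindep hgauss V hcard ε hε
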